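/- arXiv:1709.06212 — 5 statements merged into one kernel-verified Lean document; each statement's English description precedes it below -/
import Mathlib

section
/- For integers 1 ≤ k < N, ψ(k) − ψ(N) = ((N−1)!/((k−1)!(N−k−1)!)) ∫₀¹ (log t) t^{k−1} (1−t)^{N−k−1} dt, where ψ is the digamma function. -/
open Finset intervalIntegral

/-- The digamma function at a positive integer:
`ψ(n) = -γ + ∑_{j=1}^{n-1} 1/j`. -/
noncomputable def digamma (n : ℕ) : ℝ :=
  -Real.eulerMascheroniConstant + ∑ j ∈ Finset.range (n - 1), (1 : ℝ) / (j + 1)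

/-! Since `ψ(k) - ψ(N) = H_{k-1} - H_{N-1}`, it suffices to show
`I(m, n) := ∫₀¹ log t · tᵐ (1 - t)ⁿ dt = -(m! n! / (m + n + 1)!) (H_{m+n+1} - H_m)`.
Splitting `(1 - t)ⁿ⁺¹ = (1 - t)ⁿ - t (1 - t)ⁿ` gives `I(m, n + 1) = I(m, n) - I(m + 1, n)`,
so this follows by induction on `n` from `I(m, 0) = -1 / (m + 1)²`. -/

open Real
open scoped Nat

lemma digamma_eq_harmonic (n : ℕ) :
    digamma n = -eulerMascheroniConstant + harmonic (n - 1) := by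
  simp [digamma, harmonic]

lemma intervalIntegrable_log_mul_pow_mul_one_sub_pow (m n : ℕ) (a b : ℝ) :
    IntervalIntegrable (fun t => log t * t ^ m * (1 - t) ^ n) MeasureTheory.volume a b :=
  (intervalIntegrable_log'.mul_continuousOn (by fun_prop)).mul_continuousOn (by fun_prop)

lemma continuous_pow_succ_mul_log (m : ℕ) : Continuous fun t => t ^ (m + 1) * log t := by
  convert (continuous_pow m).mul continuous_mul_log using 1
  ext t
  simp only [Pi.mul_apply]
  ring

lemma integral_log_mul_pow (m : ℕ) :
    ∫ t in (0 : ℝ)..1, log t * t ^ m = -1 / ((m : ℝ) + 1) ^ 2 := by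
  let F : ℝ → ℝ := fun t => t ^ (m + 1) * log t / (m + 1) - t ^ (m + 1) / (m + 1) ^ 2
  have hF_cont : Continuous F := by
    have := continuous_pow_succ_mul_log m
    fun_prop
  have hF_deriv : ∀ t ∈ Set.Ioo (0 : ℝ) 1, HasDerivAt F (log t * t ^ m) t := by
    intro t ht
    have hpow : HasDerivAt (fun t : ℝ => t ^ (m + 1)) ((m + 1) * t ^ m) t := by
      simpa using hasDerivAt_pow (m + 1) t
    refine (((hpow.mul (hasDerivAt_log ht.1.ne')).div_const ((m : ℝ) + 1)).sub
      (hpow.div_const (((m : ℝ) + 1) ^ 2))).congr_deriv ?_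
    field_simp [ht.1.ne']
    ring
  rw [integral_eq_sub_of_hasDeriv_right_of_le zero_le_one hF_cont.continuousOn
    (fun t ht => (hF_deriv t ht).hasDerivWithinAt)
    (by simpa using intervalIntegrable_log_mul_pow_mul_one_sub_pow m 0 0 1)]
  simp [F, neg_div]

lemma integral_log_mul_pow_mul_one_sub_pow_succ (m n : ℕ) :
    ∫ t in (0 : ℝ)..1, log t * t ^ m * (1 - t) ^ (n + 1) =
      (∫ t in (0 : ℝ)..1, log t * t ^ m * (1 - t) ^ n) -
        ∫ t in (0 : ℝ)..1, log t * t ^ (m + 1) * (1 - t) ^ n := by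
  rw [← integral_sub (intervalIntegrable_log_mul_pow_mul_one_sub_pow m n 0 1)
    (intervalIntegrable_log_mul_pow_mul_one_sub_pow (m + 1) n 0 1)]
  congr 1 with t
  ring

lemma integral_log_mul_pow_mul_one_sub_pow (m n : ℕ) :
    ∫ t in (0 : ℝ)..1, log t * t ^ m * (1 - t) ^ n =
      -((m ! * n ! : ℝ) / (m + n + 1)!) * (harmonic (m + n + 1) - harmonic m) := by
  induction n generalizing m with
  | zero =>
    simp only [pow_zero, mul_one, integral_log_mul_pow, add_zero, harmonic_succ]
    push_cast [Nat.factorial_succ, Nat.factorial_zero]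
    field_simp
    ring
  | succ n ih =>
    rw [integral_log_mul_pow_mul_one_sub_pow_succ, ih, ih,
      show m + 1 + n + 1 = m + n + 1 + 1 by ring, show m + (n + 1) + 1 = m + n + 1 + 1 by ring]
    simp only [harmonic_succ, Nat.factorial_succ]
    push_cast
    field_simp
    ring

theorem digamma_diff_eq_beta_log_integral (k N : ℕ) (hk : 1 ≤ k) (hkN : k < N) :
    digamma k - digamma N =
      ((Nat.factorial (N - 1) : ℝ) /
          ((Nat.factorial (k - 1) : ℝ) * (Nat.factorial (N - k - 1) : ℝ))) *
        ∫ t in (0:ℝ)..1, Real.log t * t ^ (k - 1) * (1 - t) ^ (N - k - 1) := by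
  obtain ⟨m, rfl⟩ : ∃ m, k = m + 1 := ⟨k - 1, by omega⟩
  obtain ⟨n, rfl⟩ : ∃ n, N = m + n + 2 := ⟨N - m - 2, by omega⟩
  simp only [digamma_eq_harmonic, integral_log_mul_pow_mul_one_sub_pow,
    show m + n + 2 - 1 = m + n + 1 by omega, show m + n + 2 - (m + 1) - 1 = n by omega,
    add_tsub_cancel_right]
  field_simp
  ring
end

section
/- Let X ~ Binomial(N, p) and let m ≥ 1 be an integer with Np ≥ m and N ≥ 4. Then log(Np + m) − E[log(X + m)] ≤ 5/(2(Np + m)). -/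
/-!
With `μ = Np + m = E[X + m]` and `Y = X + m`, the inequality `log t ≤ t - 1` at `t = μ / Y` gives
`log μ - log Y ≤ (μ - Y) / μ + (Y - μ)² / (μ Y)`. The first term has mean zero. In the second,
`Y - μ = X - Np` and `Y ≥ X + 1`, so its mean is at most `μ⁻¹ E[(X - Np)² / (X + 1)]`. The identity
`k P(Bin(N+1, p) = k) = (N+1) p P(Bin(N, p) = k - 1)` turns `E[(X - Np)² / (X + 1)]` into
`((N+1) p)⁻¹` times a second moment of `Bin(N+1, p)` about `Np + 1`, which is at most `2` once
`Np ≥ 1`. Hence the left-hand side is at most `2 / μ`.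

The probability `P(Bin(n, p) = ν)` is `(bernsteinPolynomial ℝ n ν).eval p`.
-/

open Finset Polynomial

lemma Real.log_sub_log_le_sub_div_add_sq_div {x y : ℝ} (hx : 0 < x) (hy : 0 < y) :
    Real.log x - Real.log y ≤ (x - y) / x + (y - x) ^ 2 / (x * y) := by
  calc Real.log x - Real.log y = Real.log (x / y) := (Real.log_div hx.ne' hy.ne').symm
    _ ≤ x / y - 1 := Real.log_le_sub_one_of_pos (by positivity)
    _ = (x - y) / x + (y - x) ^ 2 / (x * y) := by field_simp; ring

namespace bernsteinPolynomial

variable (n : ℕ)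

lemma eval_eq (p : ℝ) (ν : ℕ) :
    (bernsteinPolynomial ℝ n ν).eval p = n.choose ν * p ^ ν * (1 - p) ^ (n - ν) := by
  simp [bernsteinPolynomial]

lemma eval_nonneg {p : ℝ} (hp0 : 0 ≤ p) (hp1 : p ≤ 1) (ν : ℕ) :
    0 ≤ (bernsteinPolynomial ℝ n ν).eval p := by
  have : 0 ≤ 1 - p := by linarith
  rw [eval_eq]
  positivity

variable (p : ℝ)

lemma sum_eval : ∑ ν ∈ range (n + 1), (bernsteinPolynomial ℝ n ν).eval p = 1 := by
  simpa [eval_finsetSum] using congr_arg (eval p) (sum ℝ n)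

lemma sum_mul_eval :
    ∑ ν ∈ range (n + 1), (ν : ℝ) * (bernsteinPolynomial ℝ n ν).eval p = n * p := by
  simpa [eval_finsetSum] using congr_arg (eval p) (sum_smul ℝ n)

lemma sum_sq_sub_mul_eval (c : ℝ) :
    ∑ ν ∈ range (n + 1), ((ν : ℝ) - c) ^ 2 * (bernsteinPolynomial ℝ n ν).eval p =
      n * p * (1 - p) + (n * p - c) ^ 2 := by
  have hvar := congr_arg (eval p) (variance ℝ n)
  simp only [eval_finsetSum, eval_mul, eval_pow, eval_sub, eval_X, eval_natCast, eval_one,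
    nsmul_eq_mul] at hvar
  calc _ = ∑ ν ∈ range (n + 1), ((n * p - ν) ^ 2 * (bernsteinPolynomial ℝ n ν).eval p
        + 2 * (n * p - c) * (ν * (bernsteinPolynomial ℝ n ν).eval p)
        + (c ^ 2 - (n * p) ^ 2) * (bernsteinPolynomial ℝ n ν).eval p) :=
        sum_congr rfl fun _ _ => by ring
    _ = _ := by
      rw [sum_add_distrib, sum_add_distrib, ← mul_sum, ← mul_sum, hvar, sum_mul_eval, sum_eval]
      ring

lemma succ_mul_eval_succ (ν : ℕ) :
    (ν + 1 : ℝ) * (bernsteinPolynomial ℝ (n + 1) (ν + 1)).eval p =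
      (n + 1) * p * (bernsteinPolynomial ℝ n ν).eval p := by
  have hchoose : ((n + 1).choose (ν + 1) : ℝ) * (ν + 1) = (n + 1) * n.choose ν := by
    exact_mod_cast (Nat.add_one_mul_choose_eq n ν).symm
  rw [eval_eq, eval_eq, Nat.add_sub_add_right]
  linear_combination p ^ ν * p * (1 - p) ^ (n - ν) * hchoose

lemma sum_mul_eval_succ (f : ℕ → ℝ) :
    ∑ ν ∈ range (n + 2), ν * f ν * (bernsteinPolynomial ℝ (n + 1) ν).eval p =
      (n + 1) * p * ∑ ν ∈ range (n + 1), f (ν + 1) * (bernsteinPolynomial ℝ n ν).eval p := by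
  rw [sum_range_succ', mul_sum, Nat.cast_zero, zero_mul, zero_mul, add_zero]
  refine sum_congr rfl fun ν _ => ?_
  push_cast
  linear_combination f (ν + 1) * succ_mul_eval_succ n p ν

lemma sum_sq_sub_div_succ_mul_eval_le (hp : p ≤ 1) (h : 1 ≤ (n + 1) * p) :
    ∑ ν ∈ range (n + 1), ((ν : ℝ) - n * p) ^ 2 / (ν + 1) * (bernsteinPolynomial ℝ n ν).eval p
      ≤ 2 := by
  have hp0 : 0 < p := by nlinarith
  have hshift := sum_mul_eval_succ n p fun k => ((k : ℝ) - (n * p + 1)) ^ 2 / k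
  have hdrop (k : ℕ) :
      (k : ℝ) * (((k : ℝ) - (n * p + 1)) ^ 2 / k) ≤ ((k : ℝ) - (n * p + 1)) ^ 2 := by
    rcases eq_or_ne k 0 with rfl | hk
    · simp only [Nat.cast_zero, zero_mul]
      positivity
    · rw [mul_div_cancel₀ _ (by exact_mod_cast hk)]
  have hbound : (n + 1) * p * ∑ ν ∈ range (n + 1), ((ν : ℝ) - n * p) ^ 2 / (ν + 1) *
      (bernsteinPolynomial ℝ n ν).eval p ≤ (n + 1) * p * (1 - p) + (1 - p) ^ 2 := by
    calc _ = ∑ k ∈ range (n + 2), k * (((k : ℝ) - (n * p + 1)) ^ 2 / k) *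
          (bernsteinPolynomial ℝ (n + 1) k).eval p := by
          rw [hshift]
          push_cast
          ring_nf
      _ ≤ ∑ k ∈ range (n + 2), ((k : ℝ) - (n * p + 1)) ^ 2 *
          (bernsteinPolynomial ℝ (n + 1) k).eval p :=
        sum_le_sum fun k _ => mul_le_mul_of_nonneg_right (hdrop k) (eval_nonneg _ hp0.le hp _)
      _ = _ := by
          rw [sum_sq_sub_mul_eval]
          push_cast
          ring
  have : (n + 1) * p * (1 - p) + (1 - p) ^ 2 ≤ (n + 1) * p * 2 := by nlinarith
  exact le_of_mul_le_mul_left (hbound.trans this) (by positivity)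

end bernsteinPolynomial

open bernsteinPolynomial in
theorem log_shifted_mean_bound_of_le_general (N : ℕ) (p : ℝ) (m : ℕ)
    (hp1 : p ≤ 1) (hm : 1 ≤ m) (hNp : (m : ℝ) ≤ N * p) :
    Real.log ((N : ℝ) * p + m) -
        ∑ j ∈ Finset.range (N + 1),
          (N.choose j : ℝ) * p ^ j * (1 - p) ^ (N - j) * Real.log ((j : ℝ) + m)
      ≤ 5 / (2 * ((N : ℝ) * p + m)) := by
  simp_rw [← eval_eq]
  set B := fun j => (bernsteinPolynomial ℝ N j).eval p
  set μ : ℝ := N * p + m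
  have hm1 : (1 : ℝ) ≤ m := by exact_mod_cast hm
  have hp0 : 0 ≤ p := by nlinarith
  have hμ : 0 < μ := by linarith
  have hpoint (j : ℕ) : Real.log μ - Real.log (j + m) ≤
      (μ - (j + m)) / μ + ((j : ℝ) - N * p) ^ 2 / (j + 1) / μ := by
    refine (Real.log_sub_log_le_sub_div_add_sq_div hμ (by positivity)).trans ?_
    rw [show (j : ℝ) + m - μ = j - N * p by ring, mul_comm μ, ← div_div]
    gcongr
  have hmean : ∑ j ∈ range (N + 1), (μ - (j + m)) * B j = 0 := by
    simp only [sub_mul, add_mul, sum_sub_distrib, sum_add_distrib, ← mul_sum, B, sum_mul_eval,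
      sum_eval, mul_one, μ, sub_self]
  calc Real.log μ - ∑ j ∈ range (N + 1), B j * Real.log (j + m)
      = ∑ j ∈ range (N + 1), B j * (Real.log μ - Real.log (j + m)) := by
        simp only [mul_sub, sum_sub_distrib, ← sum_mul, B, sum_eval, one_mul]
    _ ≤ ∑ j ∈ range (N + 1), B j * ((μ - (j + m)) / μ + ((j : ℝ) - N * p) ^ 2 / (j + 1) / μ) :=
        sum_le_sum fun j _ => mul_le_mul_of_nonneg_left (hpoint j) (eval_nonneg N hp0 hp1 j)
    _ = (∑ j ∈ range (N + 1), (μ - (j + m)) * B j) / μ +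
          (∑ j ∈ range (N + 1), ((j : ℝ) - N * p) ^ 2 / (j + 1) * B j) / μ := by
        rw [sum_div, sum_div, ← sum_add_distrib]
        exact sum_congr rfl fun j _ => by ring
    _ ≤ 0 / μ + 2 / μ := by
        rw [hmean]
        gcongr
        exact sum_sq_sub_div_succ_mul_eval_le N p hp1 (by linarith)
    _ ≤ 5 / (2 * μ) := by
        rw [zero_div, zero_add, div_le_div_iff₀ hμ (by positivity)]
        linarith

theorem log_shifted_mean_bound_of_le (N : ℕ) (p : ℝ) (m : ℕ)
    (hp0 : 0 < p) (hp1 : p ≤ 1) (hm : 1 ≤ m) (hNp : (m : ℝ) ≤ N * p) (hN : 4 ≤ N) :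
    Real.log ((N : ℝ) * p + m) -
        ∑ j ∈ Finset.range (N + 1),
          (N.choose j : ℝ) * p ^ j * (1 - p) ^ (N - j) * Real.log ((j : ℝ) + m)
      ≤ 5 / (2 * ((N : ℝ) * p + m)) :=
  log_shifted_mean_bound_of_le_general N p m hp1 hm hNp
end

section
/- Let X ~ Binomial(N, p) and let m ≥ 1 be an integer with Np < m. Then log(Np + m) − E[log(X + m)] ≤ 2/(Np + m). -/
open Finset

/-! For `x, μ ≥ m > 0` the tangent bound `log x ≥ log μ + 1 - μ / x` gives
`log x ≥ log μ + (x - μ) / μ - (x - μ) ^ 2 / m ^ 2`. Averaging over `x = X + m` with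
`μ = E[X + m] = Np + m`, the linear term vanishes and the quadratic one is
`Var X / m ^ 2 = Np(1 - p) / m ^ 2`, which is below `2 / (Np + m)` since `Np + m < 2m`.
The binomial moments are those of the Bernstein polynomials. -/

theorem bernsteinPolynomial.eval_eq_s4 {R : Type*} [CommRing R] (n ν : ℕ) (x : R) :
    (bernsteinPolynomial R n ν).eval x = n.choose ν * x ^ ν * (1 - x) ^ (n - ν) := by
  simp [bernsteinPolynomial]

section BinomialMoments

variable {R : Type*} [CommRing R] (n : ℕ) (x : R)

theorem sum_range_choose_mul_pow_mul_one_sub_pow :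
    ∑ ν ∈ range (n + 1), (n.choose ν : R) * x ^ ν * (1 - x) ^ (n - ν) = 1 := by
  simpa only [Polynomial.eval_finsetSum, bernsteinPolynomial.eval_eq_s4, Polynomial.eval_one] using
    congrArg (Polynomial.eval x) (bernsteinPolynomial.sum R n)

theorem sum_range_choose_mul_pow_mul_one_sub_pow_mul_cast :
    ∑ ν ∈ range (n + 1), (n.choose ν : R) * x ^ ν * (1 - x) ^ (n - ν) * ν = n * x := by
  have h := congrArg (Polynomial.eval x) (bernsteinPolynomial.sum_smul R n)
  simp only [nsmul_eq_mul, Polynomial.eval_finsetSum, Polynomial.eval_mul,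
    Polynomial.eval_natCast, Polynomial.eval_X, bernsteinPolynomial.eval_eq_s4] at h
  rw [← h]
  exact sum_congr rfl fun ν _ => mul_comm _ _

theorem sum_range_choose_mul_pow_mul_one_sub_pow_mul_cast_add (a : R) :
    ∑ ν ∈ range (n + 1), (n.choose ν : R) * x ^ ν * (1 - x) ^ (n - ν) * (ν + a) = n * x + a := by
  simp only [mul_add, sum_add_distrib, ← sum_mul, sum_range_choose_mul_pow_mul_one_sub_pow,
    sum_range_choose_mul_pow_mul_one_sub_pow_mul_cast, one_mul]

theorem sum_range_choose_mul_pow_mul_one_sub_pow_mul_sq_sub (a : R) :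
    ∑ ν ∈ range (n + 1), (n.choose ν : R) * x ^ ν * (1 - x) ^ (n - ν) * ((ν + a) - (n * x + a)) ^ 2
      = n * x * (1 - x) := by
  have h := congrArg (Polynomial.eval x) (bernsteinPolynomial.variance R n)
  simp only [nsmul_eq_mul, Polynomial.eval_finsetSum, Polynomial.eval_mul, Polynomial.eval_pow,
    Polynomial.eval_sub, Polynomial.eval_natCast, Polynomial.eval_X, Polynomial.eval_one,
    bernsteinPolynomial.eval_eq_s4] at h
  rw [← h]
  exact sum_congr rfl fun ν _ => by ring

end BinomialMoments

theorem Real.log_add_div_sub_sq_div_le_log {c x μ : ℝ} (hc : 0 < c) (hx : c ≤ x) (hμ : c ≤ μ) :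
    Real.log μ + (x - μ) / μ - (x - μ) ^ 2 / c ^ 2 ≤ Real.log x := by
  have hx0 : 0 < x := hc.trans_le hx
  have hμ0 : 0 < μ := hc.trans_le hμ
  have tangent : 1 - μ / x ≤ Real.log x - Real.log μ := by
    simpa [Real.log_div hx0.ne' hμ0.ne', inv_div] using
      Real.one_sub_inv_le_log_of_pos (div_pos hx0 hμ0)
  have split : 1 - μ / x = (x - μ) / μ - (x - μ) ^ 2 / (x * μ) := by
    field_simp
    ring
  have quadratic : (x - μ) ^ 2 / (x * μ) ≤ (x - μ) ^ 2 / c ^ 2 :=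
    div_le_div_of_nonneg_left (sq_nonneg _) (by positivity) (by nlinarith)
  linarith

theorem Real.log_sum_mul_sub_sum_mul_log_le {ι : Type*} (s : Finset ι) {w x : ι → ℝ} {c : ℝ}
    (hc : 0 < c) (hw : ∀ i ∈ s, 0 ≤ w i) (hw1 : ∑ i ∈ s, w i = 1) (hx : ∀ i ∈ s, c ≤ x i) :
    Real.log (∑ i ∈ s, w i * x i) - ∑ i ∈ s, w i * Real.log (x i)
      ≤ (∑ i ∈ s, w i * (x i - ∑ j ∈ s, w j * x j) ^ 2) / c ^ 2 := by
  set μ := ∑ j ∈ s, w j * x j with hmean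
  clear_value μ
  have hμ : c ≤ μ := by
    calc c = ∑ i ∈ s, w i * c := by rw [← sum_mul, hw1, one_mul]
      _ ≤ μ := hmean ▸ sum_le_sum fun i hi => mul_le_mul_of_nonneg_left (hx i hi) (hw i hi)
  have hμ0 : μ ≠ 0 := (hc.trans_le hμ).ne'
  have pointwise := sum_le_sum fun i hi => mul_le_mul_of_nonneg_left
    (Real.log_add_div_sub_sq_div_le_log hc (hx i hi) hμ) (hw i hi)
  have expand : ∑ i ∈ s, w i * (Real.log μ + (x i - μ) / μ - (x i - μ) ^ 2 / c ^ 2)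
      = Real.log μ - (∑ i ∈ s, w i * (x i - μ) ^ 2) / c ^ 2 := by
    rw [sum_congr rfl fun i _ => show w i * (Real.log μ + (x i - μ) / μ - (x i - μ) ^ 2 / c ^ 2)
        = w i * Real.log μ + (w i * x i - w i * μ) / μ - w i * (x i - μ) ^ 2 / c ^ 2 by ring]
    simp only [sum_add_distrib, sum_sub_distrib, ← sum_div, ← sum_mul, ← hmean, hw1]
    field_simp
    ring
  linarith

theorem log_shifted_mean_bound_of_lt_general (N : ℕ) (p : ℝ) (m : ℕ)
    (hp0 : 0 < p) (hp1 : p ≤ 1) (hNp : (N : ℝ) * p < m) :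
    Real.log ((N : ℝ) * p + m) -
        ∑ j ∈ Finset.range (N + 1),
          (N.choose j : ℝ) * p ^ j * (1 - p) ^ (N - j) * Real.log ((j : ℝ) + m)
      ≤ 2 / ((N : ℝ) * p + m) := by
  have hNp0 : 0 ≤ (N : ℝ) * p := by positivity
  have hm0 : (0 : ℝ) < m := hNp0.trans_lt hNp
  have hq0 : 0 ≤ 1 - p := sub_nonneg.2 hp1
  have second_order := Real.log_sum_mul_sub_sum_mul_log_le (range (N + 1))
    (w := fun j => (N.choose j : ℝ) * p ^ j * (1 - p) ^ (N - j)) (x := fun j => (j : ℝ) + m) hm0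
    (fun j _ => by positivity) (sum_range_choose_mul_pow_mul_one_sub_pow N p) (fun j _ => by simp)
  rw [sum_range_choose_mul_pow_mul_one_sub_pow_mul_cast_add,
    sum_range_choose_mul_pow_mul_one_sub_pow_mul_sq_sub] at second_order
  calc _ ≤ N * p * (1 - p) / (m : ℝ) ^ 2 := second_order
    _ ≤ 2 / (N * p + m) := by
      rw [div_le_div_iff₀ (by positivity) (by positivity)]
      nlinarith [mul_nonneg (mul_nonneg hNp0 (add_nonneg hNp0 hm0.le)) hp0.le]

theorem log_shifted_mean_bound_of_lt (N : ℕ) (p : ℝ) (m : ℕ)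
    (hp0 : 0 < p) (hp1 : p ≤ 1) (hm : 1 ≤ m) (hNp : (N : ℝ) * p < m) :
    Real.log ((N : ℝ) * p + m) -
        ∑ j ∈ Finset.range (N + 1),
          (N.choose j : ℝ) * p ^ j * (1 - p) ^ (N - j) * Real.log ((j : ℝ) + m)
      ≤ 2 / ((N : ℝ) * p + m) :=
  log_shifted_mean_bound_of_lt_general N p m hp0 hp1 hNp
end

section
/- Let X ~ Binomial(N, p) and let k be an integer with 0 ≤ k < Np and let m ≥ 0. Then E[log(X + m) | X ≥ k] − log(Np) ≤ log((1 + m/(Np)) / (1 − exp(−2(Np − k)²/N))). -/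
/-!
Jensen's inequality for the concave logarithm bounds `E[log (X + m) | X ≥ k]` by the logarithm of
the conditional mean, which is at most `(Np + m) / P(X ≥ k)`. Hoeffding's inequality (the Chernoff
bound with the Bernoulli moment generating function controlled by Hoeffding's lemma) gives
`P(X > k) ≥ 1 - exp (-2 (Np - k)² / N)`.

Since `log 0 = 0`, an atom `X + m = 0` (only possible when `k = m = 0`) is discarded first: it adds
nothing to the numerator, removing it only shrinks the normalising mass, and that mass still
contains the event `X > k`.
-/

open Finset Real

open ProbabilityTheory MeasureTheory in
lemma bernoulli_mgf_le (p t : ℝ) (hp0 : 0 ≤ p) (hp1 : p ≤ 1) :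
    p * exp t + (1 - p) ≤ exp (t ^ 2 / 8 + t * p) := by
  set μ := bernoulliMeasure (1 : ℝ) 0 ⟨p, hp0, hp1⟩
  have hsupp : ∀ᵐ x ∂μ, x ∈ Set.Icc (0 : ℝ) 1 := by
    rw [ae_iff]
    exact bernoulliMeasure_apply_of_notMem_of_notMem _ measurableSet_Icc.compl (by simp) (by simp)
  have hoeffding := (hasSubgaussianMGF_of_mem_Icc aemeasurable_id hsupp).mgf_le t
  simp only [mgf, μ, integral_bernoulliMeasure, id, smul_eq_mul, mul_one, mul_zero, add_zero,
    zero_sub] at hoeffding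
  calc p * exp t + (1 - p)
      = (p * exp (t * (1 - p)) + (1 - p) * exp (t * -p)) * exp (t * p) := by
        rw [add_mul, mul_assoc, mul_assoc, ← exp_add, ← exp_add, mul_neg, neg_add_cancel,
          exp_zero]
        ring_nf
    _ ≤ exp (t ^ 2 / 8) * exp (t * p) := by
        gcongr
        exact hoeffding.trans_eq (by norm_num; ring_nf)
    _ = exp (t ^ 2 / 8 + t * p) := (exp_add _ _).symm

lemma sum_mul_log_div_sum_le_log {ι : Type*} (s : Finset ι) (w : ι → ℝ) (x : ι → ℕ)
    (hw : ∀ i ∈ s, 0 ≤ w i) (hpos : 0 < ∑ i ∈ s with x i ≠ 0, w i) :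
    (∑ i ∈ s, w i * log (x i)) / ∑ i ∈ s, w i
      ≤ log ((∑ i ∈ s, w i * x i) / ∑ i ∈ s with x i ≠ 0, w i) := by
  set t := s.filter (fun i => x i ≠ 0)
  have hx : ∀ i ∈ t, (1 : ℝ) ≤ x i := fun i hi => by
    exact_mod_cast Nat.one_le_iff_ne_zero.mpr (mem_filter.mp hi).2
  have hlog : ∑ i ∈ t, w i * log (x i) = ∑ i ∈ s, w i * log (x i) :=
    sum_filter_of_ne fun i _ h hx0 => h (by simp [hx0])
  have hlin : ∑ i ∈ t, w i * x i = ∑ i ∈ s, w i * x i :=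
    sum_filter_of_ne fun i _ h hx0 => h (by simp [hx0])
  have hA : 0 ≤ ∑ i ∈ t, w i * log (x i) :=
    sum_nonneg fun i hi => mul_nonneg (hw i (filter_subset _ _ hi)) (log_nonneg (hx i hi))
  have hW : ∑ i ∈ t, w i ≤ ∑ i ∈ s, w i :=
    sum_le_sum_of_subset_of_nonneg (filter_subset _ _) fun i hi _ => hw i hi
  have jensen := strictConcaveOn_log_Ioi.concaveOn.le_map_centerMass
    (fun i hi => hw i (filter_subset _ _ hi)) hpos
    (p := fun i => (x i : ℝ)) fun i hi => zero_lt_one.trans_le (hx i hi)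
  simp only [centerMass, smul_eq_mul, Function.comp_def] at jensen
  rw [← hlog, ← hlin]
  calc (∑ i ∈ t, w i * log (x i)) / ∑ i ∈ s, w i
      ≤ (∑ i ∈ t, w i * log (x i)) / ∑ i ∈ t, w i := div_le_div_of_nonneg_left hA hpos hW
    _ ≤ log ((∑ i ∈ t, w i * x i) / ∑ i ∈ t, w i) := by
        rw [div_eq_inv_mul, div_eq_inv_mul]; exact jensen

lemma Nat.le_of_cast_le_mul_of_le_one {k N : ℕ} {p : ℝ} (hp1 : p ≤ 1)
    (hk : (k : ℝ) ≤ N * p) : k ≤ N := by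
  exact_mod_cast hk.trans (mul_le_of_le_one_right N.cast_nonneg hp1)

noncomputable def binomialWeight (N : ℕ) (p : ℝ) (j : ℕ) : ℝ :=
  N.choose j * p ^ j * (1 - p) ^ (N - j)

namespace binomialWeight

variable {N : ℕ} {p : ℝ}

lemma nonneg (hp0 : 0 ≤ p) (hp1 : p ≤ 1) (j : ℕ) : 0 ≤ binomialWeight N p j := by
  unfold binomialWeight
  have : 0 ≤ 1 - p := by linarith
  positivity

lemma sum_range_mul_pow (N : ℕ) (p x : ℝ) :
    ∑ j ∈ range (N + 1), binomialWeight N p j * x ^ j = (p * x + (1 - p)) ^ N := by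
  rw [add_pow]
  refine sum_congr rfl fun j _ => ?_
  rw [binomialWeight, mul_pow]
  ring

lemma sum_range_eq_one (N : ℕ) (p : ℝ) : ∑ j ∈ range (N + 1), binomialWeight N p j = 1 := by
  simpa using sum_range_mul_pow N p 1

lemma sum_range_mul_cast (N : ℕ) (p : ℝ) :
    ∑ j ∈ range (N + 1), binomialWeight N p j * j = N * p := by
  cases N with
  | zero => simp
  | succ n =>
    have hterm : ∀ j ∈ range (n + 1), binomialWeight (n + 1) p (j + 1) * ((j + 1 : ℕ) : ℝ)
        = (n + 1) * p * binomialWeight n p j := fun j _ => by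
      have hchoose : ((n + 1).choose (j + 1) : ℝ) * (j + 1) = (n + 1) * n.choose j := by
        exact_mod_cast (Nat.add_one_mul_choose_eq n j).symm
      rw [binomialWeight, binomialWeight, Nat.add_sub_add_right, pow_succ]
      push_cast
      linear_combination p ^ j * p * (1 - p) ^ (n - j) * hchoose
    rw [sum_range_succ', sum_congr rfl hterm, ← mul_sum, sum_range_eq_one]
    simp

lemma sum_range_le_exp_mul_pow (hp0 : 0 ≤ p) (hp1 : p ≤ 1) {k : ℕ} (hkN : k ≤ N) {t : ℝ}
    (ht : 0 ≤ t) :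
    ∑ j ∈ range (k + 1), binomialWeight N p j
      ≤ exp (t * k) * (p * exp (-t) + (1 - p)) ^ N := by
  calc ∑ j ∈ range (k + 1), binomialWeight N p j
      ≤ ∑ j ∈ range (k + 1), exp (t * k) * (binomialWeight N p j * exp (-t) ^ j) := by
        refine sum_le_sum fun j hj => ?_
        have hjk : (j : ℝ) ≤ k := by exact_mod_cast Nat.lt_succ_iff.mp (mem_range.mp hj)
        have hexp : 1 ≤ exp (t * k) * exp (-t) ^ j := by
          rw [← exp_nat_mul, ← exp_add, one_le_exp_iff]
          nlinarith
        nlinarith [nonneg hp0 hp1 (N := N) j]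
    _ ≤ ∑ j ∈ range (N + 1), exp (t * k) * (binomialWeight N p j * exp (-t) ^ j) :=
        sum_le_sum_of_subset_of_nonneg (range_subset_range.mpr (Nat.succ_le_succ hkN))
          fun j _ _ => by have := nonneg hp0 hp1 (N := N) j; positivity
    _ = exp (t * k) * (p * exp (-t) + (1 - p)) ^ N := by rw [← mul_sum, sum_range_mul_pow]

lemma sum_range_le_exp (hp0 : 0 ≤ p) (hp1 : p ≤ 1) {k : ℕ} (hk : (k : ℝ) ≤ N * p) :
    ∑ j ∈ range (k + 1), binomialWeight N p j ≤ exp (-2 * (N * p - k) ^ 2 / N) := by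
  have hkN := Nat.le_of_cast_le_mul_of_le_one hp1 hk
  -- the minimiser of the Chernoff exponent `t k + N (t² / 8 - t p)`
  set t := 4 * (N * p - k) / N
  have ht : 0 ≤ t := div_nonneg (by linarith) N.cast_nonneg
  have hmgf := bernoulli_mgf_le p (-t) hp0 hp1
  calc ∑ j ∈ range (k + 1), binomialWeight N p j
      ≤ exp (t * k) * (p * exp (-t) + (1 - p)) ^ N := sum_range_le_exp_mul_pow hp0 hp1 hkN ht
    _ ≤ exp (t * k) * exp ((-t) ^ 2 / 8 + -t * p) ^ N := by
        have : 0 ≤ 1 - p := by linarith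
        gcongr
    _ = exp (-2 * (N * p - k) ^ 2 / N) := by
        rw [← exp_nat_mul, ← exp_add]
        congr 1
        rcases eq_or_ne (N : ℝ) 0 with hN | hN
        · simp [t, hN]
        · simp only [t]
          field_simp
          ring

lemma one_sub_exp_le_sum_Icc (hp0 : 0 ≤ p) (hp1 : p ≤ 1) {k : ℕ} (hk : (k : ℝ) ≤ N * p) :
    1 - exp (-2 * (N * p - k) ^ 2 / N) ≤ ∑ j ∈ Icc (k + 1) N, binomialWeight N p j := by
  have hsplit := sum_range_add_sum_Ico (binomialWeight N p)
    (Nat.add_le_add_right (Nat.le_of_cast_le_mul_of_le_one hp1 hk) 1)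
  rw [sum_range_eq_one, Ico_add_one_right_eq_Icc] at hsplit
  linarith [sum_range_le_exp hp0 hp1 hk]

lemma sum_Icc_mul_add_le (hp0 : 0 ≤ p) (hp1 : p ≤ 1) (k : ℕ) {c : ℝ} (hc : 0 ≤ c) :
    ∑ j ∈ Icc k N, binomialWeight N p j * (j + c) ≤ N * p + c := by
  calc ∑ j ∈ Icc k N, binomialWeight N p j * (j + c)
      ≤ ∑ j ∈ range (N + 1), binomialWeight N p j * (j + c) :=
        sum_le_sum_of_subset_of_nonneg (fun j hj => by simp at hj ⊢; omega)
          fun j _ _ => by have := nonneg hp0 hp1 (N := N) j; positivity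
    _ = N * p + c := by
        simp only [mul_add, sum_add_distrib, ← sum_mul, sum_range_mul_cast, sum_range_eq_one,
          one_mul]

end binomialWeight

theorem binomial_truncated_log_upper_bound_general (N : ℕ) (p : ℝ) (k m : ℕ)
    (hp1 : p ≤ 1) (hk : (k : ℝ) < N * p) :
    (∑ j ∈ Finset.Icc k N,
          (N.choose j : ℝ) * p ^ j * (1 - p) ^ (N - j) * Real.log ((j : ℝ) + m)) /
        (∑ j ∈ Finset.Icc k N, (N.choose j : ℝ) * p ^ j * (1 - p) ^ (N - j)) -
      Real.log ((N : ℝ) * p)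
      ≤ Real.log ((1 + (m : ℝ) / (N * p)) /
          (1 - Real.exp (-2 * ((N : ℝ) * p - k) ^ 2 / N))) := by
  have hNp : 0 < (N : ℝ) * p := k.cast_nonneg.trans_lt hk
  have hp0 : 0 < p := pos_of_mul_pos_right hNp N.cast_nonneg
  have hN : (0 : ℝ) < N := pos_of_mul_pos_left hNp hp0.le
  have hkN := Nat.le_of_cast_le_mul_of_le_one hp1 hk.le
  have hw := binomialWeight.nonneg (N := N) hp0.le hp1
  set e := exp (-2 * ((N : ℝ) * p - k) ^ 2 / N)
  have he : e < 1 := exp_lt_one_iff.mpr (div_neg_of_neg_of_pos (by nlinarith) hN)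
  have htail : 1 - e ≤ ∑ j ∈ Icc k N with j + m ≠ 0, binomialWeight N p j :=
    (binomialWeight.one_sub_exp_le_sum_Icc hp0.le hp1 hk.le).trans <|
      sum_le_sum_of_subset_of_nonneg (fun j hj => by simp at hj ⊢; omega) fun j _ _ => hw j
  have hjensen := sum_mul_log_div_sum_le_log (Icc k N) (binomialWeight N p) (fun j => j + m)
    (fun j _ => hw j) (by linarith)
  push_cast at hjensen
  have hS : 0 < ∑ j ∈ Icc k N, binomialWeight N p j * (j + m) := by
    have hwN : 0 < binomialWeight N p N := by simpa [binomialWeight] using pow_pos hp0 N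
    exact (mul_pos hwN (by positivity)).trans_le <| single_le_sum
      (f := fun j => binomialWeight N p j * (j + m)) (fun j _ => mul_nonneg (hw j) (by positivity))
      (right_mem_Icc.mpr hkN)
  calc _ ≤ log ((∑ j ∈ Icc k N, binomialWeight N p j * (j + m)) /
          ∑ j ∈ Icc k N with j + m ≠ 0, binomialWeight N p j) - log (N * p) :=
        sub_le_sub_right hjensen _
    _ ≤ log ((N * p + m) / (1 - e)) - log (N * p) := by
        refine sub_le_sub_right (log_le_log (div_pos hS (by linarith)) ?_) _
        exact div_le_div₀ (by positivity)
          (binomialWeight.sum_Icc_mul_add_le hp0.le hp1 k m.cast_nonneg) (by linarith) htail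
    _ = log ((1 + m / (N * p)) / (1 - e)) := by
        rw [← log_div (by positivity) hNp.ne']
        congr 1
        field_simp

theorem binomial_truncated_log_upper_bound (N : ℕ) (p : ℝ) (k m : ℕ)
    (hp0 : 0 < p) (hp1 : p ≤ 1) (hk : (k : ℝ) < N * p) :
    (∑ j ∈ Finset.Icc k N,
          (N.choose j : ℝ) * p ^ j * (1 - p) ^ (N - j) * Real.log ((j : ℝ) + m)) /
        (∑ j ∈ Finset.Icc k N, (N.choose j : ℝ) * p ^ j * (1 - p) ^ (N - j)) -
      Real.log ((N : ℝ) * p)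
      ≤ Real.log ((1 + (m : ℝ) / (N * p)) /
          (1 - Real.exp (-2 * ((N : ℝ) * p - k) ^ 2 / N))) :=
  binomial_truncated_log_upper_bound_general N p k m hp1 hk
end

section
/- Let T ~ Binomial(N, p) with N ≥ 4. Then for every positive integer m, |E[log(T + m)] − log(Np + m)| ≤ C/(Np + m) for the absolute constant C = 5/2. -/
open Finset intervalIntegral

private lemma sum_pmf (N : ℕ) (p : ℝ) :
    ∑ j ∈ Finset.range (N + 1), (N.choose j : ℝ) * p ^ j * (1 - p) ^ (N - j) = 1 := by
  have h : ∑ j ∈ Finset.range (N + 1), (N.choose j : ℝ) * p ^ j * (1 - p) ^ (N - j)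
      = (p + (1 - p)) ^ N := by
    rw [add_pow]
    exact Finset.sum_congr rfl (fun j _ => by ring)
  rw [h]; norm_num

private lemma sum_pmf_mul (N : ℕ) (p : ℝ) (hN : 1 ≤ N) :
    ∑ j ∈ Finset.range (N + 1), (N.choose j : ℝ) * p ^ j * (1 - p) ^ (N - j) * j
      = (N : ℝ) * p := by
  obtain ⟨M, rfl⟩ : ∃ M, N = M + 1 := ⟨N - 1, by omega⟩
  rw [Finset.sum_range_succ']
  simp only [Nat.cast_zero, mul_zero, add_zero]
  have key : ∀ i ∈ Finset.range (M + 1),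
      ((M+1).choose (i+1) : ℝ) * p ^ (i+1) * (1 - p) ^ (M - i) * ((i:ℝ)+1)
      = ((M:ℝ)+1) * p * ((M.choose i : ℝ) * p ^ i * (1 - p) ^ (M - i)) := by
    intro i hi
    have hc : ((M+1).choose (i+1) : ℝ) * ((i:ℝ)+1) = ((M:ℝ)+1) * (M.choose i : ℝ) := by
      have := Nat.add_one_mul_choose_eq M i
      exact_mod_cast congrArg (Nat.cast (R := ℝ)) this.symm
    calc ((M+1).choose (i+1) : ℝ) * p ^ (i+1) * (1 - p) ^ (M - i) * ((i:ℝ)+1)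
        = (((M+1).choose (i+1) : ℝ) * ((i:ℝ)+1)) * p ^ (i+1) * (1 - p) ^ (M - i) := by ring
      _ = (((M:ℝ)+1) * (M.choose i : ℝ)) * p ^ (i+1) * (1 - p) ^ (M - i) := by rw [hc]
      _ = ((M:ℝ)+1) * p * ((M.choose i : ℝ) * p ^ i * (1 - p) ^ (M - i)) := by ring
  push_cast
  rw [Finset.sum_congr rfl key, ← Finset.mul_sum, sum_pmf M p, mul_one]

private lemma exp_integral (a : ℝ) (ha : 0 < a) :
    ∫ t in (0:ℝ)..1, Real.exp (a * (t - 1)) = (1 - Real.exp (-a)) / a := by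
  have hderiv : ∀ t ∈ Set.uIcc (0:ℝ) 1,
      HasDerivAt (fun t : ℝ => Real.exp (a * (t - 1)) / a) (Real.exp (a * (t - 1))) t := by
    intro t _
    have h1 : HasDerivAt (fun t : ℝ => a * (t - 1)) a t := by
      simpa using ((hasDerivAt_id t).sub_const 1).const_mul a
    have h2 := (Real.hasDerivAt_exp (a * (t - 1))).comp t h1
    have h3 := h2.div_const a
    have heq : Real.exp (a * (t - 1)) * a / a = Real.exp (a * (t - 1)) := by
      field_simp
    rw [heq] at h3
    exact h3
  have hint : IntervalIntegrable (fun t : ℝ => Real.exp (a * (t - 1))) MeasureTheory.volume 0 1 :=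
    (Real.continuous_exp.comp (by continuity)).intervalIntegrable 0 1
  rw [integral_eq_sub_of_hasDerivAt hderiv hint]
  simp [Real.exp_zero]
  ring

private lemma sum_inv_le_int (N m : ℕ) (p : ℝ) (hp0 : 0 < p) (hp1 : p ≤ 1) (hm : 1 ≤ m) :
    ∑ j ∈ Finset.range (N + 1),
        (N.choose j : ℝ) * p ^ j * (1 - p) ^ (N - j) * ((j : ℝ) + m)⁻¹
      ≤ ∫ t in (0:ℝ)..1, Real.exp (((N:ℝ) * p + m - 1) * (t - 1)) := by
  set a : ℝ := (N:ℝ) * p + m - 1 with ha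
  have step1 : ∀ j ∈ Finset.range (N + 1),
      (N.choose j : ℝ) * p ^ j * (1 - p) ^ (N - j) * ((j : ℝ) + m)⁻¹
      = ∫ t in (0:ℝ)..1, (N.choose j : ℝ) * p ^ j * (1 - p) ^ (N - j) * t ^ (j + m - 1) := by
    intro j _
    rw [intervalIntegral.integral_const_mul, integral_pow]
    have h1 : (j + m - 1 : ℕ) + 1 = j + m := by omega
    have h2 : ((j + m - 1 : ℕ) : ℝ) = (j:ℝ) + (m:ℝ) - 1 := by
      rw [Nat.cast_sub (by omega)]; push_cast; ring
    rw [h1, h2, one_pow, zero_pow (by omega)]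
    rw [show (j:ℝ) + (m:ℝ) - 1 + 1 = (j:ℝ) + m by ring]
    rw [sub_zero, one_div]
  rw [Finset.sum_congr rfl step1, ← integral_finset_sum]
  · apply intervalIntegral.integral_mono_on (by norm_num)
    · apply Continuous.intervalIntegrable
      continuity
    · apply Continuous.intervalIntegrable
      exact Real.continuous_exp.comp (by continuity)
    · intro t ht
      obtain ⟨ht0, ht1⟩ := ht
      have hid : ∑ j ∈ Finset.range (N + 1),
          (N.choose j : ℝ) * p ^ j * (1 - p) ^ (N - j) * t ^ (j + m - 1)
          = t ^ (m - 1) * (p * t + (1 - p)) ^ N := by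
        rw [add_pow]
        rw [Finset.mul_sum]
        apply Finset.sum_congr rfl
        intro j _
        have : j + m - 1 = (m - 1) + j := by omega
        rw [this, pow_add, mul_pow]
        ring
      rw [hid]
      have hbase : 0 ≤ p * t + (1 - p) := by nlinarith
      have h1 : t ^ (m - 1) ≤ Real.exp (((m:ℝ) - 1) * (t - 1)) := by
        calc t ^ (m - 1) ≤ Real.exp (t - 1) ^ (m - 1) := by
              apply pow_le_pow_left₀ ht0
              linarith [Real.add_one_le_exp (t - 1)]
          _ = Real.exp (((m:ℝ) - 1) * (t - 1)) := by
              rw [← Real.exp_nat_mul]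
              congr 1
              have : (1:ℕ) ≤ m := hm
              push_cast [Nat.cast_sub this]
              ring
      have h2 : (p * t + (1 - p)) ^ N ≤ Real.exp ((N:ℝ) * p * (t - 1)) := by
        calc (p * t + (1 - p)) ^ N ≤ Real.exp (p * (t - 1)) ^ N := by
              apply pow_le_pow_left₀ hbase
              have := Real.add_one_le_exp (p * (t - 1))
              linarith
          _ = Real.exp ((N:ℝ) * p * (t - 1)) := by
              rw [← Real.exp_nat_mul]; ring_nf
      calc t ^ (m - 1) * (p * t + (1 - p)) ^ N
          ≤ Real.exp (((m:ℝ) - 1) * (t - 1)) * Real.exp ((N:ℝ) * p * (t - 1)) := by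
            apply mul_le_mul h1 h2 (by positivity) (Real.exp_nonneg _)
        _ = Real.exp (a * (t - 1)) := by
            rw [← Real.exp_add]; congr 1; ring
  · intro j _
    apply Continuous.intervalIntegrable
    continuity

private lemma scalar_bound (a : ℝ) (ha : 0 < a) :
    (1 - Real.exp (-a)) / a ≤ 1 / (a + 1) + (5 / 2) / (a + 1) ^ 2 := by
  have hb : (0:ℝ) < a + 1 := by linarith
  have hexp : 1 - a ≤ Real.exp (-a) := by linarith [Real.add_one_le_exp (-a)]
  have hexp0 : 0 < Real.exp (-a) := Real.exp_pos _
  rcases le_or_gt (a + 1) (5/3) with hc | hc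
  · have h1 : (1 - Real.exp (-a)) / a ≤ 1 := by
      rw [div_le_one ha]; linarith
    refine h1.trans ?_
    have h2 : 3/5 ≤ 1 / (a + 1) := by
      rw [le_div_iff₀ hb]; linarith
    have h3 : 9/10 ≤ (5/2) / (a + 1) ^ 2 := by
      rw [le_div_iff₀ (by positivity)]; nlinarith
    linarith
  · have h1 : (1 - Real.exp (-a)) / a ≤ 1 / a := by
      rw [div_le_div_iff_of_pos_right ha]
      linarith
    have h2 : 1 / a ≤ 1 / (a + 1) + (5 / 2) / (a + 1) ^ 2 := by
      rw [div_add_div _ _ (ne_of_gt hb) (by positivity), div_le_div_iff₀ ha (by positivity)]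
      nlinarith
    linarith

theorem binomial_log_shifted_mean_abs_bound (N : ℕ) (p : ℝ) (m : ℕ)
    (hp0 : 0 < p) (hp1 : p ≤ 1) (hm : 1 ≤ m) (hN : 4 ≤ N) :
    |(∑ j ∈ Finset.range (N + 1),
          (N.choose j : ℝ) * p ^ j * (1 - p) ^ (N - j) * Real.log ((j : ℝ) + m)) -
        Real.log ((N : ℝ) * p + m)|
      ≤ (5 / 2) / ((N : ℝ) * p + m) := by
  have hNpos : (0:ℝ) < N := by exact_mod_cast show 0 < N by omega
  have hμ : 0 < (N:ℝ) * p := mul_pos hNpos hp0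
  have hm1 : (1:ℝ) ≤ m := by exact_mod_cast hm
  set b : ℝ := (N:ℝ) * p + m with hbdef
  have hb1 : 1 < b := by simp only [hbdef]; linarith
  have hb0 : 0 < b := by linarith
  have hw : ∀ j, 0 ≤ (N.choose j : ℝ) * p ^ j * (1 - p) ^ (N - j) := by
    intro j
    have h1 : (0:ℝ) ≤ 1 - p := by linarith
    positivity
  have hjm : ∀ j : ℕ, (0:ℝ) < (j:ℝ) + m := by
    intro j
    have : (0:ℝ) ≤ j := Nat.cast_nonneg j
    linarith
  have hsum := sum_pmf N p
  have hmean := sum_pmf_mul N p (by omega)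
  -- the key bound on the expected reciprocal
  have hS : ∑ j ∈ Finset.range (N + 1),
      (N.choose j : ℝ) * p ^ j * (1 - p) ^ (N - j) * ((j : ℝ) + m)⁻¹
      ≤ 1 / b + (5/2) / b ^ 2 := by
    have ha : 0 < (N:ℝ) * p + m - 1 := by linarith
    have h1 := sum_inv_le_int N m p hp0 hp1 hm
    rw [exp_integral _ ha] at h1
    have h2 := scalar_bound ((N:ℝ) * p + m - 1) ha
    rw [show (N:ℝ) * p + m - 1 + 1 = b by ring] at h2
    linarith
  -- upper side : Jensen-type via log x ≤ x - 1
  have upper : (∑ j ∈ Finset.range (N + 1),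
        (N.choose j : ℝ) * p ^ j * (1 - p) ^ (N - j) * Real.log ((j : ℝ) + m))
      ≤ Real.log b := by
    have step : ∀ j ∈ Finset.range (N + 1),
        (N.choose j : ℝ) * p ^ j * (1 - p) ^ (N - j) * Real.log ((j : ℝ) + m)
        ≤ ((N.choose j : ℝ) * p ^ j * (1 - p) ^ (N - j) * j) * b⁻¹
          + (N.choose j : ℝ) * p ^ j * (1 - p) ^ (N - j) * ((m:ℝ) * b⁻¹ - 1 + Real.log b) := by
      intro j _
      have hx : 0 < ((j:ℝ) + m) / b := div_pos (hjm j) hb0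
      have hlog : Real.log (((j:ℝ) + m) / b) ≤ ((j:ℝ) + m) / b - 1 :=
        Real.log_le_sub_one_of_pos hx
      rw [Real.log_div (ne_of_gt (hjm j)) (ne_of_gt hb0)] at hlog
      have hkey : Real.log ((j:ℝ) + m) ≤ (j:ℝ) * b⁻¹ + ((m:ℝ) * b⁻¹ - 1 + Real.log b) := by
        have : ((j:ℝ) + m) / b = (j:ℝ) * b⁻¹ + (m:ℝ) * b⁻¹ := by
          field_simp
        linarith [hlog, this ▸ hlog]
      calc (N.choose j : ℝ) * p ^ j * (1 - p) ^ (N - j) * Real.log ((j : ℝ) + m)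
          ≤ (N.choose j : ℝ) * p ^ j * (1 - p) ^ (N - j)
              * ((j:ℝ) * b⁻¹ + ((m:ℝ) * b⁻¹ - 1 + Real.log b)) :=
            mul_le_mul_of_nonneg_left hkey (hw j)
        _ = ((N.choose j : ℝ) * p ^ j * (1 - p) ^ (N - j) * j) * b⁻¹
            + (N.choose j : ℝ) * p ^ j * (1 - p) ^ (N - j) * ((m:ℝ) * b⁻¹ - 1 + Real.log b) := by
            ring
    calc (∑ j ∈ Finset.range (N + 1),
          (N.choose j : ℝ) * p ^ j * (1 - p) ^ (N - j) * Real.log ((j : ℝ) + m))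
        ≤ ∑ j ∈ Finset.range (N + 1),
            (((N.choose j : ℝ) * p ^ j * (1 - p) ^ (N - j) * j) * b⁻¹
              + (N.choose j : ℝ) * p ^ j * (1 - p) ^ (N - j) * ((m:ℝ) * b⁻¹ - 1 + Real.log b)) :=
          Finset.sum_le_sum step
      _ = (∑ j ∈ Finset.range (N + 1), (N.choose j : ℝ) * p ^ j * (1 - p) ^ (N - j) * j) * b⁻¹
          + (∑ j ∈ Finset.range (N + 1), (N.choose j : ℝ) * p ^ j * (1 - p) ^ (N - j))
            * ((m:ℝ) * b⁻¹ - 1 + Real.log b) := by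
          rw [Finset.sum_add_distrib, ← Finset.sum_mul, ← Finset.sum_mul]
      _ = Real.log b := by
          rw [hmean, hsum, one_mul]
          field_simp
          simp only [hbdef]
          ring
  -- lower side
  have lower : Real.log b
      - (∑ j ∈ Finset.range (N + 1),
          (N.choose j : ℝ) * p ^ j * (1 - p) ^ (N - j) * Real.log ((j : ℝ) + m))
      ≤ (5/2) / b := by
    have step : ∀ j ∈ Finset.range (N + 1),
        (N.choose j : ℝ) * p ^ j * (1 - p) ^ (N - j) * (Real.log b + 1)
          - b * ((N.choose j : ℝ) * p ^ j * (1 - p) ^ (N - j) * ((j:ℝ) + m)⁻¹)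
        ≤ (N.choose j : ℝ) * p ^ j * (1 - p) ^ (N - j) * Real.log ((j : ℝ) + m) := by
      intro j _
      have hx : 0 < b / ((j:ℝ) + m) := div_pos hb0 (hjm j)
      have hlog : Real.log (b / ((j:ℝ) + m)) ≤ b / ((j:ℝ) + m) - 1 :=
        Real.log_le_sub_one_of_pos hx
      rw [Real.log_div (ne_of_gt hb0) (ne_of_gt (hjm j))] at hlog
      have hkey : Real.log b + 1 - b * ((j:ℝ) + m)⁻¹ ≤ Real.log ((j:ℝ) + m) := by
        have hdd : b / ((j:ℝ) + m) = b * ((j:ℝ) + m)⁻¹ := by rw [div_eq_mul_inv]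
        rw [hdd] at hlog
        linarith
      calc (N.choose j : ℝ) * p ^ j * (1 - p) ^ (N - j) * (Real.log b + 1)
            - b * ((N.choose j : ℝ) * p ^ j * (1 - p) ^ (N - j) * ((j:ℝ) + m)⁻¹)
          = (N.choose j : ℝ) * p ^ j * (1 - p) ^ (N - j)
              * (Real.log b + 1 - b * ((j:ℝ) + m)⁻¹) := by ring
        _ ≤ (N.choose j : ℝ) * p ^ j * (1 - p) ^ (N - j) * Real.log ((j : ℝ) + m) :=
            mul_le_mul_of_nonneg_left hkey (hw j)
    have hsumstep : (∑ j ∈ Finset.range (N + 1),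
          (N.choose j : ℝ) * p ^ j * (1 - p) ^ (N - j)) * (Real.log b + 1)
        - b * (∑ j ∈ Finset.range (N + 1),
            (N.choose j : ℝ) * p ^ j * (1 - p) ^ (N - j) * ((j:ℝ) + m)⁻¹)
        ≤ ∑ j ∈ Finset.range (N + 1),
            (N.choose j : ℝ) * p ^ j * (1 - p) ^ (N - j) * Real.log ((j : ℝ) + m) := by
      rw [Finset.sum_mul, Finset.mul_sum, ← Finset.sum_sub_distrib]
      exact Finset.sum_le_sum step
    rw [hsum, one_mul] at hsumstep
    have hbS : b * (∑ j ∈ Finset.range (N + 1),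
        (N.choose j : ℝ) * p ^ j * (1 - p) ^ (N - j) * ((j:ℝ) + m)⁻¹)
        ≤ 1 + (5/2) / b := by
      have := mul_le_mul_of_nonneg_left hS (le_of_lt hb0)
      have heq : b * (1 / b + (5/2) / b ^ 2) = 1 + (5/2) / b := by
        field_simp
      linarith [heq ▸ this]
    linarith
  rw [abs_sub_le_iff]
  constructor
  · have : 0 ≤ (5/2) / b := by positivity
    linarith
  · exact lower
end
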